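/- Honest advantage implies honest blocks: let c be a chain with strictly decreasing, pairwise distinct slot numbers, all lying in a slot interval I, and suppose every block b of c satisfies Winner b.bid b.slot. If the length of c is at least the number of adversarial slots in I plus w (where an adversarial slot is one won by some dishonest party), then c contains at least w honest blocks (blocks b with Honest b.bid). -/

import Mathlib

/-! The slots of `c` are distinct, so its dishonest blocks inject into the adversarial slots of
`[a, b]`; the remaining (at least `w`) blocks of `c` are honest. -/

structure Block (Party : Type) where
  slot : Nat
  bid : Party

theorem List.nodup_map_of_get_strictAnti {α β : Type*} [Preorder β] {f : α → β} {l : List α}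
    (h : ∀ i j (hij : i < j) (hj : j < l.length),
      f (l.get ⟨j, hj⟩) < f (l.get ⟨i, lt_trans hij hj⟩)) :
    (l.map f).Nodup :=
  List.pairwise_iff_getElem.mpr fun i j hi hj hij => by
    simp only [List.getElem_map]
    exact (h i j hij (by simpa using hj)).ne'

theorem List.length_le_card_of_nodup_map {α β : Type*} [DecidableEq β] {f : α → β}
    {l : List α} {s : Finset β} (hl : (l.map f).Nodup) (hs : ∀ x ∈ l, f x ∈ s) :
    l.length ≤ s.card :=
  calc l.length = (l.map f).toFinset.card := by rw [List.toFinset_card_of_nodup hl, List.length_map]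
    _ ≤ s.card := Finset.card_le_card fun y hy => by
      obtain ⟨x, hx, rfl⟩ := List.mem_map.mp (List.mem_toFinset.mp hy)
      exact hs x hx

theorem length_filter_not_honest_le {Party : Type} [Fintype Party]
    (Winner : Party → Nat → Bool) (Honest : Party → Bool) (c : List (Block Party)) (a b : Nat)
    (hslots : (c.map Block.slot).Nodup)
    (hin : ∀ blk ∈ c, a ≤ blk.slot ∧ blk.slot ≤ b)
    (hwin : ∀ blk ∈ c, Winner blk.bid blk.slot = true) :
    (c.filter (fun blk => !Honest blk.bid)).length ≤ ((Finset.Icc a b).filter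
        (fun sl => ∃ p : Party, Winner p sl = true ∧ ¬ Honest p = true)).card := by
  refine List.length_le_card_of_nodup_map (hslots.sublist (List.filter_sublist.map _)) ?_
  intro blk hblk
  obtain ⟨hblk, hdishonest⟩ := List.mem_filter.mp hblk
  exact Finset.mem_filter.mpr
    ⟨Finset.mem_Icc.mpr (hin blk hblk), blk.bid, hwin blk hblk, by simpa using hdishonest⟩

theorem honest_advantage_implies_honest_blocks_general {Party : Type}
    [Fintype Party]
    (Winner : Party → Nat → Bool) (Honest : Party → Bool)
    (c : List (Block Party))
    (hdec : ∀ i j (hij : i < j) (hj : j < c.length),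
      (c.get ⟨j, hj⟩).slot < (c.get ⟨i, lt_trans hij hj⟩).slot)
    (a b : Nat)
    (hin : ∀ blk ∈ c, a ≤ blk.slot ∧ blk.slot ≤ b)
    (hwin : ∀ blk ∈ c, Winner blk.bid blk.slot = true)
    (w : Nat)
    (hlen : ((Finset.Icc a b).filter
        (fun sl => ∃ p : Party, Winner p sl = true ∧ ¬ Honest p = true)).card + w
      ≤ c.length) :
    w ≤ (c.filter (fun blk => Honest blk.bid)).length := by
  have hdishonest := length_filter_not_honest_le Winner Honest c a b
    (List.nodup_map_of_get_strictAnti hdec) hin hwin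
  have hsplit := List.length_eq_length_filter_add (l := c) (fun blk => Honest blk.bid)
  omega

theorem honest_advantage_implies_honest_blocks {Party : Type}
    [Fintype Party] [DecidableEq Party]
    (Winner : Party → Nat → Bool) (Honest : Party → Bool)
    (c : List (Block Party))
    (hdec : ∀ i j (hij : i < j) (hj : j < c.length),
      (c.get ⟨j, hj⟩).slot < (c.get ⟨i, lt_trans hij hj⟩).slot)
    (a b : Nat)
    (hin : ∀ blk ∈ c, a ≤ blk.slot ∧ blk.slot ≤ b)
    (hwin : ∀ blk ∈ c, Winner blk.bid blk.slot = true)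
    (w : Nat)
    (hlen : ((Finset.Icc a b).filter
        (fun sl => ∃ p : Party, Winner p sl = true ∧ ¬ Honest p = true)).card + w
      ≤ c.length) :
    w ≤ (c.filter (fun blk => Honest blk.bid)).length :=
  honest_advantage_implies_honest_blocks_general Winner Honest c hdec a b hin hwin w hlen
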